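/- If φ is a non-monochromatic coloring of a Type 8 cycle that is a constant 2-labelling with constants a and b, then one of the following holds: (i) φ is 1-antiperiodic (alternate), a = (p/2−2)y + z + t and b = (p/2)x; (ii) φ is (p/2)-periodic and there exists a natural number α with 0 ≤ α ≤ p/4−1 such that a = (2α+2)x + 2αy + z + t and b = (2α+2)(x+y); (iii) φ is (p/2)-antiperiodic, a = (p/4)x + (p/4−1)y + z and b = (p/4)x + (p/4−1)y + t; (iv) t = (p/4)x + (1−p/4)y, either φ or its complementary coloring is a rotation (by some k ∈ ZMod p) of a coloring ψ satisfying ψ(i) = ψ(i+p/2) = black for every even i with 0 ≤ i < p/2 and ψ(i) ≠ ψ(i+p/2) for every odd i with 0 ≤ i < p/2, and either (a = (p/2)x + (p/4−1)y + z and b = (3p/4)x) or (a = (p/4−1)y + z and b = (p/4)x). -/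

import Mathlib

/-!
Put `N = p/2` and split the vertices by parity. The Type 8 weight is `y` on even and `x` on odd
vertices, corrected by `z - y` at `0` and by `t - y` at `N`, so
`S_φ(k) = y B(k) + x B'(k) + [φ k black] (z - y) + [φ (k + N) black] (t - y)`,
where `B(k)` and `B'(k)` count the black vertices of the parity of `k` and of the other one.
As `y ≠ t`, comparing two vertices of equal parity and colour shows that the colour of `k + N` is
determined by that of `k`; hence on each parity class `φ` is `N`-periodic or `N`-antiperiodic.
If both classes are periodic, either they contain equally many black vertices, which gives (ii),
or, as `x ≠ y`, the colour of a vertex is determined by its parity, which gives (i). Both classes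
antiperiodic gives (iii); one of each forces the periodic class to be monochromatic and gives (iv).
The argument only uses the group structure: it runs in any finite abelian group of order `4q`
with a surjective parity `π : G →+ ZMod 2` and an element `N ≠ 0` with `N + N = 0`, `π N = 0`.
-/

open Finset

theorem ZMod.add_one_add_one (e : ZMod 2) : e + 1 + 1 = e := by
  revert e; decide

theorem ZMod.eq_add_one_of_ne {e f : ZMod 2} (h : f ≠ e) : f = e + 1 := by
  revert e f; decide

theorem forall_of_parity {G : Type*} {π : G → ZMod 2} {P : G → Prop} (h0 : ∀ k, π k = 0 → P k)
    (h1 : ∀ k, π k = 1 → P k) (k : G) : P k := by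
  have : π k = 0 ∨ π k = 1 := by generalize π k = e; revert e; decide
  exact this.elim (h0 k) (h1 k)

theorem exists_eq_true_and_exists_eq_false {α : Type*} {φ : α → Bool}
    (h : ∃ i j, φ i ≠ φ j) : (∃ k, φ k = true) ∧ ∃ k, φ k = false := by
  obtain ⟨i, j, hij⟩ := h
  cases hi : φ i
  · exact ⟨⟨j, by rw [Bool.eq_not.2 hij.symm, hi]; rfl⟩, i, hi⟩
  · exact ⟨⟨i, hi⟩, j, by rw [Bool.eq_not.2 hij.symm, hi]; rfl⟩

section Counting

variable {G : Type*} [AddGroup G] {c : G}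

theorem even_card_of_add_mem [DecidableEq G] (hc0 : c ≠ 0) (hc : c + c = 0) (s : Finset G)
    (hs : ∀ v ∈ s, v + c ∈ s) : Even #s := by
  induction s using Finset.strongInduction with
  | H s ih =>
    rcases s.eq_empty_or_nonempty with rfl | ⟨v, hv⟩
    · simp
    have hcc : ∀ u : G, u + c + c = u := fun u => by rw [add_assoc, hc, add_zero]
    have hvc : v + c ∈ s.erase v := mem_erase.2 ⟨fun h => hc0 (by simpa using h), hs v hv⟩
    have hrest : Even #((s.erase v).erase (v + c)) := by
      refine ih _ ((erase_ssubset hvc).trans (erase_ssubset hv)) fun u hu => ?_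
      simp only [mem_erase] at hu ⊢
      obtain ⟨huvc, huv, hus⟩ := hu
      exact ⟨fun h => huv (add_right_cancel h), fun h => huvc (by rw [← h, hcc]), hs u hus⟩
    rw [← card_erase_add_one hv, ← card_erase_add_one hvc]
    exact hrest.add_one.add_one

theorem two_mul_card_filter_of_add_ne (hc : c + c = 0) {s : Finset G}
    (hs : ∀ v ∈ s, v + c ∈ s) {φ : G → Bool} (hφ : ∀ v ∈ s, φ (v + c) ≠ φ v) :
    2 * #{v ∈ s | φ v = true} = #s := by
  have hcc : ∀ u : G, u + c + c = u := fun u => by rw [add_assoc, hc, add_zero]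
  have hflip : ∀ v ∈ s, φ (v + c) = !φ v := fun v hv => Bool.eq_not.2 (hφ v hv)
  have hbw : #{v ∈ s | φ v = true} = #{v ∈ s | ¬φ v = true} := by
    refine card_nbij' (· + c) (· + c) (fun u hu => ?_) (fun u hu => ?_)
      (fun u _ => hcc u) (fun u _ => hcc u)
    all_goals
      simp only [mem_coe, mem_filter] at hu ⊢
      simp [hs u hu.1, hflip u hu.1, hu.2]
  rw [two_mul]
  nth_rewrite 2 [hbw]
  exact card_filter_add_card_filter_not _

theorem two_mul_card_fiber_of_surjective [Fintype G] (π : G →+ ZMod 2)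
    (hπ : Function.Surjective π) (e : ZMod 2) : 2 * #{v | π v = e} = Fintype.card G := by
  obtain ⟨g, hg⟩ := hπ 1
  have hswap : #{v | π v = e} = #{v | ¬π v = e} := by
    refine card_nbij' (· + g) (· - g) (fun u hu => ?_) (fun u hu => ?_)
      (fun u _ => add_sub_cancel_right u g) (fun u _ => sub_add_cancel u g)
    all_goals
      simp only [mem_coe, mem_filter, mem_univ, true_and, map_add, map_sub, hg] at hu ⊢
      revert hu; generalize π u = f; revert f e; decide
  rw [two_mul]
  nth_rewrite 2 [hswap]
  exact card_filter_add_card_filter_not _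

theorem card_fiber_eq_two_mul [Fintype G] {π : G →+ ZMod 2} {q : ℕ}
    (hπ : Function.Surjective π) (hG : Fintype.card G = 4 * q) (e : ZMod 2) :
    #{v | π v = e} = 2 * q := by
  have := two_mul_card_fiber_of_surjective π hπ e
  omega

end Counting

section Labelling

variable {G : Type*} [AddCommGroup G] [Fintype G]

def labelSum (w : G → ℝ) (φ : G → Bool) (k : G) : ℝ :=
  ∑ u, if φ (u + k) = true then w u else 0

def IsConstTwoLabelling (w : G → ℝ) (φ : G → Bool) (a b : ℝ) : Prop :=
  ∀ k, (φ k = true → labelSum w φ k = a) ∧ (φ k = false → labelSum w φ k = b)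

theorem labelSum_eq_sum_sub (w : G → ℝ) (φ : G → Bool) (k : G) :
    labelSum w φ k = ∑ v, if φ v = true then w (v - k) else 0 :=
  Fintype.sum_equiv (Equiv.addRight k) _ _ fun u => by simp

def type8Weight [DecidableEq G] (π : G →+ ZMod 2) (N : G) (z x y t : ℝ) (u : G) : ℝ :=
  (if π u = 0 then y else x) + (if u = 0 then z - y else 0) + (if u = N then t - y else 0)

def blackCount (π : G →+ ZMod 2) (φ : G → Bool) (e : ZMod 2) : ℕ :=
  #{v | π v = e ∧ φ v = true}

theorem labelSum_type8Weight [DecidableEq G] (π : G →+ ZMod 2) (N : G) (z x y t : ℝ)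
    (φ : G → Bool) (k : G) :
    labelSum (type8Weight π N z x y t) φ k =
      y * blackCount π φ (π k) + x * blackCount π φ (π k + 1) +
        (if φ k = true then z - y else 0) + (if φ (k + N) = true then t - y else 0) := by
  have hsplit : ∀ v, (if φ v = true then type8Weight π N z x y t (v - k) else 0) =
      ((if π v = π k ∧ φ v = true then y else 0) +
          (if π v = π k + 1 ∧ φ v = true then x else 0)) +
        (if v = k then (if φ k = true then z - y else 0) else 0) +
        (if v = k + N then (if φ (k + N) = true then t - y else 0) else 0) := by
    intro v
    have hpar : ∀ e f : ZMod 2, (f = e + 1 ↔ f ≠ e) := by decide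
    have hN : v - k = N ↔ v = k + N := by rw [sub_eq_iff_eq_add, add_comm]
    simp only [type8Weight, map_sub, sub_eq_zero, hN, hpar]
    split_ifs <;> simp_all
  simp only [labelSum_eq_sum_sub, hsplit, sum_add_distrib, sum_ite_eq', mem_univ, if_true]
  rw [← sum_filter, ← sum_filter, sum_const, sum_const, nsmul_eq_mul, nsmul_eq_mul, blackCount,
    blackCount]
  ring

end Labelling

section Type8

variable {G : Type*} [AddCommGroup G] {π : G →+ ZMod 2} {N : G} {φ : G → Bool}

theorem exists_color_of_antiperiodicOn (hπ : Function.Surjective π) (hπN : π N = 0)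
    {e : ZMod 2} (hanti : ∀ k, π k = e → φ (k + N) ≠ φ k) (c : Bool) :
    ∃ k, π k = e ∧ φ k = c := by
  obtain ⟨k, hk⟩ := hπ e
  by_cases hc : φ k = c
  · exact ⟨k, hk, hc⟩
  · refine ⟨k + N, by rw [map_add, hπN, add_zero, hk], ?_⟩
    rw [Bool.eq_not.2 (hanti k hk), Bool.eq_not.2 hc, Bool.not_not]

theorem exists_rotation_of_forall_eq_true (hπ : Function.Surjective π) {e : ZMod 2}
    (hmono : ∀ v, π v = e → φ v = true) (hanti : ∀ v, π v = e + 1 → φ (v + N) ≠ φ v) :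
    ∃ (ψ : G → Bool) (k : G), (∀ v, π v = 0 → ψ v = true) ∧
      (∀ v, π v = 1 → ψ (v + N) ≠ ψ v) ∧ ∀ i, φ i = ψ (i + k) := by
  obtain ⟨g, hg⟩ := hπ e
  refine ⟨fun v => φ (v + g), -g, fun v hv => hmono _ (by rw [map_add, hv, hg, zero_add]),
    fun v hv => ?_, fun i => by simp⟩
  simp only [add_right_comm v N g]
  exact hanti _ (by rw [map_add, hv, hg, add_comm])

variable [Fintype G] {z x y t a b : ℝ} {q : ℕ}

theorem blackCount_le_card_fiber (e : ZMod 2) : blackCount π φ e ≤ #{v | π v = e} :=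
  card_le_card fun v => by simp only [mem_filter, mem_univ, true_and]; exact And.left

theorem blackCount_eq_card_fiber (e : ZMod 2) (h : ∀ v, π v = e → φ v = true) :
    blackCount π φ e = #{v | π v = e} :=
  congrArg card (filter_congr fun v _ => ⟨And.left, fun hv => ⟨hv, h v hv⟩⟩)

theorem blackCount_eq_zero (e : ZMod 2) (h : ∀ v, π v = e → φ v = false) :
    blackCount π φ e = 0 :=
  card_eq_zero.2 (filter_eq_empty_iff.2 fun v _ hv => by simp [h v hv.1] at hv)

theorem two_mul_blackCount_of_antiperiodicOn (hN : N + N = 0) (hπN : π N = 0) {e : ZMod 2}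
    (hanti : ∀ k, π k = e → φ (k + N) ≠ φ k) : 2 * blackCount π φ e = #{v | π v = e} := by
  rw [blackCount, ← filter_filter]
  refine two_mul_card_filter_of_add_ne hN (fun v hv => ?_)
    fun v hv => hanti v (mem_filter.1 hv).2
  simp only [mem_filter, mem_univ, true_and, map_add, hπN, add_zero] at hv ⊢
  exact hv

theorem even_blackCount_of_periodicOn [DecidableEq G] (hN0 : N ≠ 0) (hN : N + N = 0)
    (hπN : π N = 0) {e : ZMod 2} (hper : ∀ k, π k = e → φ (k + N) = φ k) :
    Even (blackCount π φ e) := by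
  refine even_card_of_add_mem hN0 hN _ fun v hv => ?_
  simp only [mem_filter, mem_univ, true_and, map_add, hπN, add_zero] at hv ⊢
  exact ⟨hv.1, (hper v hv.1).trans hv.2⟩

variable [DecidableEq G]

theorem type8_black_eq (hlab : IsConstTwoLabelling (type8Weight π N z x y t) φ a b) {k : G}
    (hk : φ k = true) :
    a = y * blackCount π φ (π k) + x * blackCount π φ (π k + 1) + (z - y) +
      (if φ (k + N) = true then t - y else 0) := by
  rw [← (hlab k).1 hk, labelSum_type8Weight, if_pos hk]

theorem type8_white_eq (hlab : IsConstTwoLabelling (type8Weight π N z x y t) φ a b) {k : G}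
    (hk : φ k = false) :
    b = y * blackCount π φ (π k) + x * blackCount π φ (π k + 1) +
      (if φ (k + N) = true then t - y else 0) := by
  rw [← (hlab k).2 hk, labelSum_type8Weight, hk]
  simp

theorem type8_antipode_color_eq (hyt : y ≠ t)
    (hlab : IsConstTwoLabelling (type8Weight π N z x y t) φ a b) {k k' : G} (hπ : π k = π k')
    (hφ : φ k = φ k') : φ (k + N) = φ (k' + N) := by
  have key :
      (if φ (k + N) = true then t - y else 0) = (if φ (k' + N) = true then t - y else 0) := by
    cases hk : φ k
    · have h := type8_white_eq hlab hk
      have h' := type8_white_eq hlab (hφ ▸ hk)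
      rw [hπ] at h
      linarith
    · have h := type8_black_eq hlab hk
      have h' := type8_black_eq hlab (hφ ▸ hk)
      rw [hπ] at h
      linarith
  have hty : t - y ≠ 0 := sub_ne_zero.2 hyt.symm
  revert key
  cases φ (k + N) <;> cases φ (k' + N) <;> simp [hty, Ne.symm hty]

theorem type8_antipode_dichotomy (hyt : y ≠ t)
    (hlab : IsConstTwoLabelling (type8Weight π N z x y t) φ a b) (hN : N + N = 0)
    (hπN : π N = 0) (e : ZMod 2) :
    (∀ k, π k = e → φ (k + N) = φ k) ∨ (∀ k, π k = e → φ (k + N) ≠ φ k) := by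
  by_cases hper : ∀ k, π k = e → φ (k + N) = φ k
  · exact Or.inl hper
  push Not at hper
  obtain ⟨k₀, hk₀, hflip⟩ := hper
  refine Or.inr fun k hk hkN => ?_
  by_cases hc : φ k = φ k₀
  · have := type8_antipode_color_eq hyt hlab (hk.trans hk₀.symm) hc
    exact hflip (by rw [← this, hkN, hc])
  · -- `k₀ + N` has the parity of `k₀` and the colour of `k`
    have hc' : φ k = φ (k₀ + N) := (Bool.eq_not.2 hc).trans (Bool.eq_not.2 hflip).symm
    have := type8_antipode_color_eq hyt hlab (by rw [hk, map_add, hπN, add_zero, hk₀]) hc'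
    rw [add_assoc k₀, hN, add_zero] at this
    exact hc (hkN.symm.trans this)

theorem type8_values_of_periodic_of_blackCount_eq (hN0 : N ≠ 0) (hN : N + N = 0)
    (hπN : π N = 0) (hπ : Function.Surjective π) (hG : Fintype.card G = 4 * q)
    (hlab : IsConstTwoLabelling (type8Weight π N z x y t) φ a b) (hper : Function.Periodic φ N)
    (hn : blackCount π φ 0 = blackCount π φ 1) {kb kw : G} (hkb : φ kb = true)
    (hkw : φ kw = false) :
    ∃ α : ℕ, α ≤ q - 1 ∧ a = (2 * α + 2) * x + 2 * α * y + z + t ∧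
      b = (2 * α + 2) * (x + y) := by
  set m := blackCount π φ 0
  have hall : ∀ e, blackCount π φ e = m := by
    intro e
    fin_cases e
    exacts [rfl, hn.symm]
  have heven : Even m := even_blackCount_of_periodicOn hN0 hN hπN fun k _ => hper k
  have hpos : 0 < m := hall (π kb) ▸ card_pos.2 ⟨kb, by simp [hkb]⟩
  have hle : m ≤ 2 * q := card_fiber_eq_two_mul hπ hG 0 ▸ blackCount_le_card_fiber 0
  obtain ⟨α, hα⟩ : ∃ α, m = 2 * α + 2 := ⟨m / 2 - 1, by obtain ⟨j, hj⟩ := heven; omega⟩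
  have hmα : (m : ℝ) = 2 * α + 2 := by exact_mod_cast hα
  refine ⟨α, by omega, ?_, ?_⟩
  · have h := type8_black_eq hlab hkb
    rw [hall, hall, hper, if_pos hkb, hmα] at h
    linarith
  · have h := type8_white_eq hlab hkw
    rw [hall, hall, hper, hkw, hmα] at h
    simp only [Bool.false_eq_true, if_false] at h
    linarith

theorem type8_color_ne_of_parity_ne (hxy : x ≠ y)
    (hlab : IsConstTwoLabelling (type8Weight π N z x y t) φ a b) (hper : Function.Periodic φ N)
    (hn : blackCount π φ 0 ≠ blackCount π φ 1) {k k' : G} (hkk' : π k ≠ π k') :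
    φ k ≠ φ k' := by
  intro hφ
  have hne : blackCount π φ (π k) ≠ blackCount π φ (π k + 1) := by
    generalize π k = e
    fin_cases e
    exacts [hn, Ne.symm hn]
  -- by periodicity the two labelling sums differ only in the parity terms
  have hbase : y * (blackCount π φ (π k) : ℝ) + x * blackCount π φ (π k + 1) =
      y * blackCount π φ (π k + 1) + x * blackCount π φ (π k) := by
    have hk' : π k' = π k + 1 := ZMod.eq_add_one_of_ne (Ne.symm hkk')
    cases hc : φ k
    · have h := type8_white_eq hlab hc
      have h' := type8_white_eq hlab (hφ ▸ hc)
      rw [hper, ← hφ, hk', ZMod.add_one_add_one] at h'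
      rw [hper] at h
      linarith
    · have h := type8_black_eq hlab hc
      have h' := type8_black_eq hlab (hφ ▸ hc)
      rw [hper, ← hφ, hk', ZMod.add_one_add_one] at h'
      rw [hper] at h
      linarith
  have hmul : ((blackCount π φ (π k) : ℝ) - blackCount π φ (π k + 1)) * (y - x) = 0 := by
    linarith
  rcases mul_eq_zero.1 hmul with h | h
  · exact hne (by exact_mod_cast sub_eq_zero.1 h)
  · exact hxy (sub_eq_zero.1 h).symm

theorem type8_values_of_periodic_of_blackCount_ne (hxy : x ≠ y) (hπ : Function.Surjective π)
    (hG : Fintype.card G = 4 * q) (hlab : IsConstTwoLabelling (type8Weight π N z x y t) φ a b)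
    (hper : Function.Periodic φ N) (hn : blackCount π φ 0 ≠ blackCount π φ 1) {kb kw : G}
    (hkb : φ kb = true) (hkw : φ kw = false) :
    a = (2 * q - 2) * y + z + t ∧ b = 2 * q * x := by
  have hcol : ∀ k k' : G, π k ≠ π k' → φ k ≠ φ k' := fun _ _ =>
    type8_color_ne_of_parity_ne hxy hlab hper hn
  obtain ⟨g, hg⟩ := hπ (π kb + 1)
  have hkb1 : π kb ≠ π kb + 1 := (succ_ne_self _).symm
  have hgw : φ g = false := by rw [Bool.eq_not.2 (hcol g kb (hg ▸ hkb1.symm)), hkb]; rfl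
  have hblack : ∀ v, π v = π kb → φ v = true := fun v hv => by
    rw [Bool.eq_not.2 (hcol v g (by rw [hv, hg]; exact hkb1)), hgw]; rfl
  have hwhite : ∀ v, π v = π kb + 1 → φ v = false := fun v hv => by
    rw [Bool.eq_not.2 (hcol v kb (by rw [hv]; exact hkb1.symm)), hkb]; rfl
  have hkw' : π kw = π kb + 1 := ZMod.eq_add_one_of_ne fun h => by simp [hblack kw h] at hkw
  have h1 := type8_black_eq hlab hkb
  rw [hper, hkb, if_pos rfl, blackCount_eq_card_fiber _ hblack, blackCount_eq_zero _ hwhite,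
    card_fiber_eq_two_mul hπ hG] at h1
  have h2 := type8_white_eq hlab hkw
  rw [hper, hkw, hkw', ZMod.add_one_add_one, blackCount_eq_card_fiber _ hblack,
    blackCount_eq_zero _ hwhite, card_fiber_eq_two_mul hπ hG] at h2
  push_cast at h1 h2
  constructor <;> linarith

theorem type8_values_of_antiperiodic (hN : N + N = 0) (hπN : π N = 0)
    (hπ : Function.Surjective π) (hG : Fintype.card G = 4 * q)
    (hlab : IsConstTwoLabelling (type8Weight π N z x y t) φ a b)
    (hanti : ∀ k, φ (k + N) ≠ φ k) :
    a = q * x + (q - 1) * y + z ∧ b = q * x + (q - 1) * y + t := by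
  have hcount : ∀ e, blackCount π φ e = q := fun e => by
    have := two_mul_blackCount_of_antiperiodicOn hN hπN (e := e) fun k _ => hanti k
    rw [card_fiber_eq_two_mul hπ hG] at this
    omega
  obtain ⟨kb, -, hkb⟩ := exists_color_of_antiperiodicOn hπ hπN (e := 0) (fun k _ => hanti k) true
  obtain ⟨kw, -, hkw⟩ := exists_color_of_antiperiodicOn hπ hπN (e := 0) (fun k _ => hanti k) false
  have ha := type8_black_eq hlab hkb
  have hb := type8_white_eq hlab hkw
  rw [Bool.eq_not.2 (hanti kb), hkb, hcount, hcount] at ha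
  rw [Bool.eq_not.2 (hanti kw), hkw, hcount, hcount] at hb
  simp only [Bool.not_true, Bool.not_false, Bool.false_eq_true, if_false, if_true] at ha hb
  constructor <;> linarith

theorem type8_eq_true_of_periodicOn_of_antiperiodicOn (hyt : y ≠ t)
    (hπ : Function.Surjective π) (hπN : π N = 0)
    (hlab : IsConstTwoLabelling (type8Weight π N z x y t) φ a b) {e : ZMod 2}
    (hper : ∀ k, π k = e → φ (k + N) = φ k) (hanti : ∀ k, π k = e + 1 → φ (k + N) ≠ φ k)
    {k₀ k : G} (hk₀ : π k₀ = e) (hk₀b : φ k₀ = true) (hk : π k = e) : φ k = true := by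
  by_contra hkw
  rw [Bool.not_eq_true] at hkw
  obtain ⟨mb, hmb, hmbc⟩ := exists_color_of_antiperiodicOn hπ hπN hanti true
  obtain ⟨mw, hmw, hmwc⟩ := exists_color_of_antiperiodicOn hπ hπN hanti false
  -- the class `e` would give `a - b = (z - y) + (t - y)`, the class `e + 1` gives `a - b = z - t`
  have h1 := type8_black_eq hlab hk₀b
  have h2 := type8_white_eq hlab hkw
  have h3 := type8_black_eq hlab hmbc
  have h4 := type8_white_eq hlab hmwc
  rw [hper k₀ hk₀, hk₀b, hk₀] at h1
  rw [hper k hk, hkw, hk] at h2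
  rw [Bool.eq_not.2 (hanti mb hmb), hmbc, hmb] at h3
  rw [Bool.eq_not.2 (hanti mw hmw), hmwc, hmw] at h4
  simp only [Bool.not_true, Bool.not_false, Bool.false_eq_true, if_false, if_true] at h1 h2 h3 h4
  exact hyt (by linarith)

theorem type8_values_of_periodicOn_of_antiperiodicOn (hyt : y ≠ t) (hN : N + N = 0)
    (hπN : π N = 0) (hπ : Function.Surjective π) (hG : Fintype.card G = 4 * q)
    (hlab : IsConstTwoLabelling (type8Weight π N z x y t) φ a b) {e : ZMod 2}
    (hper : ∀ k, π k = e → φ (k + N) = φ k) (hanti : ∀ k, π k = e + 1 → φ (k + N) ≠ φ k) :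
    t = q * x + (1 - q) * y ∧
      ((∀ v, π v = e → φ v = true) ∧ a = 2 * q * x + (q - 1) * y + z ∧ b = 3 * q * x ∨
        (∀ v, π v = e → φ v = false) ∧ a = (q - 1) * y + z ∧ b = q * x) := by
  have hodd : blackCount π φ (e + 1) = q := by
    have := two_mul_blackCount_of_antiperiodicOn hN hπN hanti
    rw [card_fiber_eq_two_mul hπ hG] at this
    omega
  obtain ⟨mb, hmb, hmbc⟩ := exists_color_of_antiperiodicOn hπ hπN hanti true
  obtain ⟨mw, hmw, hmwc⟩ := exists_color_of_antiperiodicOn hπ hπN hanti false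
  have ha := type8_black_eq hlab hmbc
  have hb := type8_white_eq hlab hmwc
  rw [Bool.eq_not.2 (hanti mb hmb), hmbc, hmb, ZMod.add_one_add_one, hodd] at ha
  rw [Bool.eq_not.2 (hanti mw hmw), hmwc, hmw, ZMod.add_one_add_one, hodd] at hb
  simp only [Bool.not_true, Bool.not_false, Bool.false_eq_true, if_false, if_true] at ha hb
  obtain ⟨k₀, hk₀⟩ := hπ e
  cases hc : φ k₀
  · have hwhite : ∀ v, π v = e → φ v = false := fun v hv => by
      by_contra h
      rw [Bool.not_eq_false] at h
      simp [type8_eq_true_of_periodicOn_of_antiperiodicOn hyt hπ hπN hlab hper hanti hv h hk₀]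
        at hc
    have h0 := type8_white_eq hlab hc
    rw [hper k₀ hk₀, hc, hk₀, blackCount_eq_zero _ hwhite, hodd] at h0
    rw [blackCount_eq_zero _ hwhite] at ha hb
    simp only [Bool.false_eq_true, if_false] at h0
    push_cast at ha hb h0
    exact ⟨by linarith, Or.inr ⟨hwhite, by linarith, by linarith⟩⟩
  · have hblack : ∀ v, π v = e → φ v = true := fun v hv =>
      type8_eq_true_of_periodicOn_of_antiperiodicOn hyt hπ hπN hlab hper hanti hk₀ hc hv
    have h0 := type8_black_eq hlab hc
    rw [hper k₀ hk₀, hc, hk₀, blackCount_eq_card_fiber _ hblack, card_fiber_eq_two_mul hπ hG,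
      hodd] at h0
    rw [blackCount_eq_card_fiber _ hblack, card_fiber_eq_two_mul hπ hG] at ha hb
    simp only [if_true] at h0
    push_cast at ha hb h0
    exact ⟨by linarith, Or.inl ⟨hblack, by linarith, by linarith⟩⟩

end Type8

section Cycle

variable {q : ℕ}

def cycleParity (q : ℕ) : ZMod (4 * q) →+ ZMod 2 :=
  (ZMod.castHom ((by norm_num : 2 ∣ 4).mul_right q) (ZMod 2)).toAddMonoidHom

theorem cycleParity_natCast (i : ℕ) : cycleParity q i = i := by
  simp [cycleParity]

theorem cycleParity_one : cycleParity q 1 = 1 := by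
  simpa using cycleParity_natCast (q := q) 1

theorem cycleParity_surjective : Function.Surjective (cycleParity q) :=
  ZMod.ringHom_surjective _

theorem cycleParity_antipode : cycleParity q ((2 * q : ℕ) : ZMod (4 * q)) = 0 := by
  rw [cycleParity_natCast, ZMod.natCast_eq_zero_iff_even]
  exact even_two_mul q

theorem antipode_add_self :
    ((2 * q : ℕ) : ZMod (4 * q)) + ((2 * q : ℕ) : ZMod (4 * q)) = 0 := by
  rw [← Nat.cast_add, show 2 * q + 2 * q = 4 * q by ring, ZMod.natCast_self]

theorem antipode_ne_zero [NeZero q] : ((2 * q : ℕ) : ZMod (4 * q)) ≠ 0 := by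
  have := NeZero.pos q
  rw [Ne, ZMod.natCast_eq_zero_iff]
  exact Nat.not_dvd_of_pos_of_lt (by omega) (by omega)

theorem type8Weight_eq [NeZero q] {w : ZMod (4 * q) → ℝ} {z x y t : ℝ} (hw0 : w 0 = z)
    (hwt : w ((2 * q : ℕ) : ZMod (4 * q)) = t)
    (hwx : ∀ i : ℕ, 1 ≤ i → i < 2 * q → Odd i → w (i : ZMod (4 * q)) = x)
    (hwy : ∀ i : ℕ, 1 ≤ i → i < 2 * q → Even i → w (i : ZMod (4 * q)) = y)
    (hwsym : ∀ i : ℕ, 1 ≤ i → i < 2 * q →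
      w ((4 * q - i : ℕ) : ZMod (4 * q)) = w (i : ZMod (4 * q))) :
    w = type8Weight (cycleParity q) ((2 * q : ℕ) : ZMod (4 * q)) z x y t := by
  have hbase : ∀ n : ℕ, 1 ≤ n → n < 2 * q → w n = if Even n then y else x := fun n h1 h2 => by
    split_ifs with h
    exacts [hwy n h1 h2 h, hwx n h1 h2 (Nat.not_even_iff_odd.1 h)]
  funext u
  obtain ⟨n, hn, rfl⟩ : ∃ n < 4 * q, (n : ZMod (4 * q)) = u :=
    ⟨u.val, u.val_lt, u.natCast_zmod_val⟩
  have hcast : ∀ m < 4 * q, ((n : ZMod (4 * q)) = m ↔ n = m) := fun m hm => by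
    rw [ZMod.natCast_eq_natCast_iff', Nat.mod_eq_of_lt hn, Nat.mod_eq_of_lt hm]
  have hq := NeZero.pos q
  have h0 := hcast 0 (by omega)
  rw [Nat.cast_zero] at h0
  simp only [type8Weight, cycleParity_natCast, ZMod.natCast_eq_zero_iff_even, h0,
    hcast (2 * q) (by omega)]
  rcases lt_trichotomy n (2 * q) with hlt | rfl | hgt
  · rcases Nat.eq_zero_or_pos n with rfl | hpos
    · rw [Nat.cast_zero, hw0, if_pos ⟨0, rfl⟩, if_pos rfl, if_neg (by omega)]
      ring
    · rw [hbase n hpos hlt, if_neg (show n ≠ 0 by omega), if_neg (show n ≠ 2 * q by omega)]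
      ring
  · rw [hwt, if_pos (even_two_mul q), if_neg (show 2 * q ≠ 0 by omega), if_pos rfl]
    ring
  · have hsym := hwsym (4 * q - n) (by omega) (by omega)
    rw [show 4 * q - (4 * q - n) = n by omega] at hsym
    have hpar : Even (4 * q - n) ↔ Even n := by simp only [Nat.even_iff]; omega
    rw [hsym, hbase _ (by omega) (by omega), if_neg (show n ≠ 0 by omega),
      if_neg (show n ≠ 2 * q by omega)]
    simp only [hpar, add_zero]

theorem natCast_pattern_of_parity {ψ : ZMod (4 * q) → Bool}
    (h0 : ∀ v, cycleParity q v = 0 → ψ v = true)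
    (h1 : ∀ v, cycleParity q v = 1 → ψ (v + ((2 * q : ℕ) : ZMod (4 * q))) ≠ ψ v) :
    (∀ i : ℕ, Even i → ψ i = true ∧ ψ (i + ((2 * q : ℕ) : ZMod (4 * q))) = true) ∧
      ∀ i : ℕ, Odd i → ψ i ≠ ψ (i + ((2 * q : ℕ) : ZMod (4 * q))) := by
  refine ⟨fun i hi => ⟨h0 _ ?_, h0 _ ?_⟩, fun i hi => (h1 _ ?_).symm⟩
  · rwa [cycleParity_natCast, ZMod.natCast_eq_zero_iff_even]
  · rwa [map_add, cycleParity_antipode, add_zero, cycleParity_natCast,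
      ZMod.natCast_eq_zero_iff_even]
  · rwa [cycleParity_natCast, ZMod.natCast_eq_one_iff_odd]

theorem type8_special_case [NeZero q] {z x y t a b : ℝ} {φ : ZMod (4 * q) → Bool}
    (hyt : y ≠ t) (hlab : IsConstTwoLabelling
      (type8Weight (cycleParity q) ((2 * q : ℕ) : ZMod (4 * q)) z x y t) φ a b) {e : ZMod 2}
    (hper : ∀ k, cycleParity q k = e → φ (k + ((2 * q : ℕ) : ZMod (4 * q))) = φ k)
    (hanti : ∀ k, cycleParity q k = e + 1 → φ (k + ((2 * q : ℕ) : ZMod (4 * q))) ≠ φ k) :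
    t = (q : ℝ) * x + (1 - (q : ℝ)) * y ∧
      (∃ (ψ : ZMod (4 * q) → Bool) (k : ZMod (4 * q)),
        (∀ i : ℕ, i < 2 * q → Even i →
          ψ (i : ZMod (4 * q)) = true ∧
          ψ ((i : ZMod (4 * q)) + ((2 * q : ℕ) : ZMod (4 * q))) = true) ∧
        (∀ i : ℕ, i < 2 * q → Odd i →
          ψ (i : ZMod (4 * q)) ≠ ψ ((i : ZMod (4 * q)) + ((2 * q : ℕ) : ZMod (4 * q)))) ∧
        ((∀ i, φ i = ψ (i + k)) ∨ (∀ i, (!φ i) = ψ (i + k)))) ∧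
      ((a = ((2 * q : ℕ) : ℝ) * x + ((q : ℝ) - 1) * y + z ∧ b = ((3 * q : ℕ) : ℝ) * x) ∨
        (a = ((q : ℝ) - 1) * y + z ∧ b = (q : ℝ) * x)) := by
  obtain ⟨ht, ⟨hblack, ha, hb⟩ | ⟨hwhite, ha, hb⟩⟩ :=
    type8_values_of_periodicOn_of_antiperiodicOn hyt antipode_add_self cycleParity_antipode
      cycleParity_surjective (ZMod.card _) hlab hper hanti
  · obtain ⟨ψ, k, h0, h1, hφ⟩ :=
      exists_rotation_of_forall_eq_true cycleParity_surjective hblack hanti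
    have hψ := natCast_pattern_of_parity h0 h1
    refine ⟨ht, ⟨ψ, k, fun i _ => hψ.1 i, fun i _ => hψ.2 i, Or.inl hφ⟩, Or.inl ⟨?_, ?_⟩⟩ <;>
      push_cast <;> linarith
  · obtain ⟨ψ, k, h0, h1, hφ⟩ := exists_rotation_of_forall_eq_true (φ := fun i => !φ i)
      cycleParity_surjective (fun v hv => by rw [hwhite v hv]; rfl)
      (fun v hv h => hanti v hv (Bool.not_inj h))
    have hψ := natCast_pattern_of_parity h0 h1
    exact ⟨ht, ⟨ψ, k, fun i _ => hψ.1 i, fun i _ => hψ.2 i, Or.inr hφ⟩, Or.inr ⟨ha, hb⟩⟩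

end Cycle

theorem type8_constant2Labelling_general
    (p : ℕ) [NeZero p] (hp4 : p % 4 = 0)
    (w : ZMod p → ℝ) (z x y t : ℝ) (hxy : x ≠ y) (hyt : y ≠ t)
    (hw0 : w 0 = z) (hwt : w ((p / 2 : ℕ) : ZMod p) = t)
    (hwx : ∀ i : ℕ, 1 ≤ i → i < p / 2 → Odd i → w (i : ZMod p) = x)
    (hwy : ∀ i : ℕ, 1 ≤ i → i < p / 2 → Even i → w (i : ZMod p) = y)
    (hwsym : ∀ i : ℕ, 1 ≤ i → i < p / 2 →
      w (((p - i : ℕ) : ZMod p)) = w (i : ZMod p))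
    (φ : ZMod p → Bool) (hnontriv : ∃ i j : ZMod p, φ i ≠ φ j)
    (a b : ℝ)
    (hlab : ∀ k : ZMod p,
      (φ k = true → (∑ u : ZMod p, if φ (u + k) = true then w u else 0) = a) ∧
      (φ k = false → (∑ u : ZMod p, if φ (u + k) = true then w u else 0) = b)) :
    -- (i) alternate
    ((∀ i : ZMod p, φ (i + 1) ≠ φ i) ∧
      a = (((p / 2 : ℕ) : ℝ) - 2) * y + z + t ∧ b = ((p / 2 : ℕ) : ℝ) * x) ∨
    -- (ii) (p/2)-periodic
    ((∀ i : ZMod p, φ (i + ((p / 2 : ℕ) : ZMod p)) = φ i) ∧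
      ∃ α : ℕ, α ≤ p / 4 - 1 ∧
        a = (2 * (α : ℝ) + 2) * x + 2 * (α : ℝ) * y + z + t ∧
        b = (2 * (α : ℝ) + 2) * (x + y)) ∨
    -- (iii) (p/2)-antiperiodic
    ((∀ i : ZMod p, φ (i + ((p / 2 : ℕ) : ZMod p)) ≠ φ i) ∧
      a = ((p / 4 : ℕ) : ℝ) * x + (((p / 4 : ℕ) : ℝ) - 1) * y + z ∧
      b = ((p / 4 : ℕ) : ℝ) * x + (((p / 4 : ℕ) : ℝ) - 1) * y + t) ∨
    -- (iv) special case
    (t = ((p / 4 : ℕ) : ℝ) * x + (1 - ((p / 4 : ℕ) : ℝ)) * y ∧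
      (∃ (ψ : ZMod p → Bool) (k : ZMod p),
        (∀ i : ℕ, i < p / 2 → Even i →
          ψ (i : ZMod p) = true ∧
          ψ ((i : ZMod p) + ((p / 2 : ℕ) : ZMod p)) = true) ∧
        (∀ i : ℕ, i < p / 2 → Odd i →
          ψ (i : ZMod p) ≠ ψ ((i : ZMod p) + ((p / 2 : ℕ) : ZMod p))) ∧
        ((∀ i : ZMod p, φ i = ψ (i + k)) ∨ (∀ i : ZMod p, (!φ i) = ψ (i + k)))) ∧
      ((a = ((p / 2 : ℕ) : ℝ) * x + (((p / 4 : ℕ) : ℝ) - 1) * y + z ∧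
          b = ((3 * p / 4 : ℕ) : ℝ) * x) ∨
        (a = (((p / 4 : ℕ) : ℝ) - 1) * y + z ∧ b = ((p / 4 : ℕ) : ℝ) * x))) := by
  obtain ⟨q, rfl⟩ : ∃ q, p = 4 * q := ⟨p / 4, by omega⟩
  have : NeZero q := ⟨fun h => NeZero.ne (4 * q) (by simp [h])⟩
  rw [show 4 * q / 2 = 2 * q by omega] at hwt hwx hwy hwsym ⊢
  rw [show 4 * q / 4 = q by omega, show 3 * (4 * q) / 4 = 3 * q by omega]
  obtain rfl := type8Weight_eq hw0 hwt hwx hwy hwsym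
  obtain ⟨⟨kb, hkb⟩, kw, hkw⟩ := exists_eq_true_and_exists_eq_false hnontriv
  have hdich := type8_antipode_dichotomy hyt hlab antipode_add_self cycleParity_antipode
  rcases hdich 0 with h0 | h0 <;> rcases hdich 1 with h1 | h1
  · have hper : Function.Periodic φ ((2 * q : ℕ) : ZMod (4 * q)) := forall_of_parity h0 h1
    by_cases hn : blackCount (cycleParity q) φ 0 = blackCount (cycleParity q) φ 1
    · exact Or.inr (Or.inl ⟨hper, type8_values_of_periodic_of_blackCount_eq antipode_ne_zero
        antipode_add_self cycleParity_antipode cycleParity_surjective (ZMod.card _) hlab hper hn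
        hkb hkw⟩)
    · obtain ⟨ha, hb⟩ := type8_values_of_periodic_of_blackCount_ne hxy cycleParity_surjective
        (ZMod.card _) hlab hper hn hkb hkw
      refine Or.inl ⟨fun i => type8_color_ne_of_parity_ne hxy hlab hper hn ?_, ?_, ?_⟩
      · rw [map_add, cycleParity_one]
        exact succ_ne_self _
      all_goals push_cast; linarith
  · exact Or.inr (Or.inr (Or.inr (type8_special_case hyt hlab h0 h1)))
  · exact Or.inr (Or.inr (Or.inr (type8_special_case hyt hlab h1 h0)))
  · have hanti : ∀ k, φ (k + ((2 * q : ℕ) : ZMod (4 * q))) ≠ φ k := forall_of_parity h0 h1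
    obtain ⟨ha, hb⟩ := type8_values_of_antiperiodic antipode_add_self cycleParity_antipode
      cycleParity_surjective (ZMod.card _) hlab hanti
    exact Or.inr (Or.inr (Or.inl ⟨hanti, ha, hb⟩))

/-- Non-trivial constant 2-labellings of Type 8 cycles
(`z (xy)^((p-4)/4) x t x (yx)^((p-4)/4)`): one of four cases holds —
alternate, `(p/2)`-periodic, `(p/2)`-antiperiodic, or (when
`t = (p/4)x + (1-p/4)y`) a rotation, up to complement, of a special coloring. -/
theorem type8_constant2Labelling
    (p : ℕ) [NeZero p] (hp : 8 ≤ p) (hp4 : p % 4 = 0)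
    (w : ZMod p → ℝ) (z x y t : ℝ) (hxy : x ≠ y) (hyt : y ≠ t)
    (hw0 : w 0 = z) (hwt : w ((p / 2 : ℕ) : ZMod p) = t)
    (hwx : ∀ i : ℕ, 1 ≤ i → i < p / 2 → Odd i → w (i : ZMod p) = x)
    (hwy : ∀ i : ℕ, 1 ≤ i → i < p / 2 → Even i → w (i : ZMod p) = y)
    (hwsym : ∀ i : ℕ, 1 ≤ i → i < p / 2 →
      w (((p - i : ℕ) : ZMod p)) = w (i : ZMod p))
    (φ : ZMod p → Bool) (hnontriv : ∃ i j : ZMod p, φ i ≠ φ j)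
    (a b : ℝ)
    (hlab : ∀ k : ZMod p,
      (φ k = true → (∑ u : ZMod p, if φ (u + k) = true then w u else 0) = a) ∧
      (φ k = false → (∑ u : ZMod p, if φ (u + k) = true then w u else 0) = b)) :
    -- (i) alternate
    ((∀ i : ZMod p, φ (i + 1) ≠ φ i) ∧
      a = (((p / 2 : ℕ) : ℝ) - 2) * y + z + t ∧ b = ((p / 2 : ℕ) : ℝ) * x) ∨
    -- (ii) (p/2)-periodic
    ((∀ i : ZMod p, φ (i + ((p / 2 : ℕ) : ZMod p)) = φ i) ∧
      ∃ α : ℕ, α ≤ p / 4 - 1 ∧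
        a = (2 * (α : ℝ) + 2) * x + 2 * (α : ℝ) * y + z + t ∧
        b = (2 * (α : ℝ) + 2) * (x + y)) ∨
    -- (iii) (p/2)-antiperiodic
    ((∀ i : ZMod p, φ (i + ((p / 2 : ℕ) : ZMod p)) ≠ φ i) ∧
      a = ((p / 4 : ℕ) : ℝ) * x + (((p / 4 : ℕ) : ℝ) - 1) * y + z ∧
      b = ((p / 4 : ℕ) : ℝ) * x + (((p / 4 : ℕ) : ℝ) - 1) * y + t) ∨
    -- (iv) special case
    (t = ((p / 4 : ℕ) : ℝ) * x + (1 - ((p / 4 : ℕ) : ℝ)) * y ∧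
      (∃ (ψ : ZMod p → Bool) (k : ZMod p),
        (∀ i : ℕ, i < p / 2 → Even i →
          ψ (i : ZMod p) = true ∧
          ψ ((i : ZMod p) + ((p / 2 : ℕ) : ZMod p)) = true) ∧
        (∀ i : ℕ, i < p / 2 → Odd i →
          ψ (i : ZMod p) ≠ ψ ((i : ZMod p) + ((p / 2 : ℕ) : ZMod p))) ∧
        ((∀ i : ZMod p, φ i = ψ (i + k)) ∨ (∀ i : ZMod p, (!φ i) = ψ (i + k)))) ∧
      ((a = ((p / 2 : ℕ) : ℝ) * x + (((p / 4 : ℕ) : ℝ) - 1) * y + z ∧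
          b = ((3 * p / 4 : ℕ) : ℝ) * x) ∨
        (a = (((p / 4 : ℕ) : ℝ) - 1) * y + z ∧ b = ((p / 4 : ℕ) : ℝ) * x))) :=
  type8_constant2Labelling_general p hp4 w z x y t hxy hyt hw0 hwt hwx hwy hwsym φ hnontriv a b hlab
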